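/- Let r₀ ∈ H^{1,2}(ℝ) ∩ H^{2,1}(ℝ) with |r₀(z)| ≤ 1 on ℝ and |r₀(z)| = 1 only for z = ±1, satisfying r₀(z) = conj(r₀(1/z)) = −conj(r₀(−z)); let z₁,…,z_{2N₀} lie on the unit circle in the open lower half-plane with Re z_j ≠ 0 and z_{j+N₀} = −conj(z_j), and let c_j ∈ ℂ with c_{j+N₀} = c_j. Fix y ≥ 0 and T > 0. For t ∈ [0,T) let K(t) be the operator on L²(ℝ;ℂ²) built from the time-evolved data r(z;t) = exp(−2iz(z²−1)t/(z²+1)²) r₀(z) and c_j(t) = exp(t·Im z_j/(Re z_j)²) c_j, namely K(t) = [[0, K^{(1)}(t)],[K^{(2)}(t), 0]] with K^{(1)}(t)h = C_−(−conj(r(·;t)) e^{−2θ} h) + Σ_j (C h)(conj(z_j)) conj(c_j(t)) e^{y Im z_j}/(· − conj(z_j)) and K^{(2)}(t)h = C_+(r(·;t) e^{2θ} h) + Σ_j (C h)(z_j) c_j(t) e^{y Im z_j}/(· − z_j), where θ(z) = −(i/4)(z − 1/z)y. Then t ↦ K(t) is locally Lipschitz in operator norm: for every t₀ ∈ [0,T)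 there is a constant C with ‖K(t) − K(t₀)‖_{L²→L²} ≤ C |t − t₀| for t ∈ [0,T); consequently t ↦ (I − K(t))⁻¹ is continuous in operator norm on [0,T). -/

import Mathlib

noncomputable section

open MeasureTheory Filter Set

/-- The Japanese bracket `⟨x⟩ = √(1+x²)`. -/
def jb (x : ℝ) : ℝ := Real.sqrt (1 + x ^ 2)

/-- Membership in the weighted Sobolev space `H^{k,s}(ℝ)`. -/
def MemHks {F : Type*} [NormedAddCommGroup F] [NormedSpace ℝ F]
    (k : ℕ) (s : ℝ) (f : ℝ → F) : Prop :=
  ∀ j, j ≤ k → MemLp (fun x => jb x ^ s • iteratedDeriv j f x) 2 volume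

/-- The Cauchy integral `C f(w) = (1/2πi) ∫_ℝ f(s)/(s-w) ds`. -/
def CauchyInt (f : ℝ → ℂ) (w : ℂ) : ℂ :=
  (1 / (2 * Real.pi * Complex.I)) * ∫ s : ℝ, f s / ((s : ℂ) - w)

/-- The Cauchy projection operator `C₊`. -/
def Cplus (f : ℝ → ℂ) (z : ℝ) : ℂ :=
  limUnder (nhdsWithin (0 : ℝ) (Set.Ioi 0)) fun γ => CauchyInt f ((z : ℂ) + γ * Complex.I)

/-- The Cauchy projection operator `C₋`. -/
def Cminus (f : ℝ → ℂ) (z : ℝ) : ℂ :=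
  limUnder (nhdsWithin (0 : ℝ) (Set.Ioi 0)) fun γ => CauchyInt f ((z : ℂ) - γ * Complex.I)

/-- The phase `θ(z) = -(i/4)(z - 1/z) y`. -/
def theta (y z : ℝ) : ℂ := -(Complex.I / 4) * ((z : ℂ) - (z : ℂ)⁻¹) * (y : ℂ)

/-- Time evolution of the reflection coefficient. -/
def rEv (r₀ : ℝ → ℂ) (t : ℝ) : ℝ → ℂ := fun z =>
  Complex.exp (-2 * Complex.I * (z : ℂ) * ((z : ℂ) ^ 2 - 1) * (t : ℂ) /
    ((z : ℂ) ^ 2 + 1) ^ 2) * r₀ z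

/-- Time evolution of the norming constants. -/
def cEv (zj cj : ℕ → ℂ) (t : ℝ) : ℕ → ℂ := fun j =>
  Complex.exp (((t * (zj j).im / (zj j).re ^ 2 : ℝ) : ℂ)) * cj j

/-- The operator `K^{(1)}(t)`. -/
def K1op (r : ℝ → ℂ) (N₀ : ℕ) (zj cj : ℕ → ℂ) (y : ℝ) (h : ℝ → ℂ) : ℝ → ℂ := fun z =>
  Cminus (fun s => -(starRingEnd ℂ (r s)) * Complex.exp (-2 * theta y s) * h s) z +
    ∑ j ∈ Finset.range (2 * N₀),
      CauchyInt h (starRingEnd ℂ (zj j)) * starRingEnd ℂ (cj j) *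
        Complex.exp (((y * (zj j).im : ℝ) : ℂ)) / ((z : ℂ) - starRingEnd ℂ (zj j))

/-- The operator `K^{(2)}(t)`. -/
def K2op (r : ℝ → ℂ) (N₀ : ℕ) (zj cj : ℕ → ℂ) (y : ℝ) (h : ℝ → ℂ) : ℝ → ℂ := fun z =>
  Cplus (fun s => r s * Complex.exp (2 * theta y s) * h s) z +
    ∑ j ∈ Finset.range (2 * N₀),
      CauchyInt h (zj j) * cj j *
        Complex.exp (((y * (zj j).im : ℝ) : ℂ)) / ((z : ℂ) - zj j)

abbrev LpC2 := MeasureTheory.Lp ℂ 2 (volume : Measure ℝ)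

namespace RHPaux

lemma lip_exp_I (x : ℝ) : ‖Complex.exp ((x:ℂ) * Complex.I) - 1‖ ≤ |x| := by
  have hd : ∀ u : ℝ, HasDerivAt (fun v : ℝ => Complex.exp ((v:ℂ) * Complex.I))
      (Complex.exp ((u:ℂ) * Complex.I) * Complex.I) u := by
    intro u
    have h1 : HasDerivAt (fun v : ℝ => (v:ℂ) * Complex.I) Complex.I u := by
      simpa using (Complex.ofRealCLM.hasDerivAt (x := u)).mul_const Complex.I
    simpa using h1.cexp
  have := convex_univ.norm_image_sub_le_of_norm_hasDerivWithin_le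
    (f := fun v : ℝ => Complex.exp ((v:ℂ) * Complex.I))
    (f' := fun u => Complex.exp ((u:ℂ) * Complex.I) * Complex.I) (C := 1)
    (fun u _ => (hd u).hasDerivWithinAt)
    (fun u _ => by
      rw [norm_mul, Complex.norm_exp, Complex.norm_I]
      simp) (mem_univ (0:ℝ)) (mem_univ x)
  simpa using this

lemma lip_exp_neg {x y : ℝ} (hx : x ≤ 0) (hy : y ≤ 0) :
    |Real.exp x - Real.exp y| ≤ |x - y| := by
  have := (convex_Iic (0:ℝ)).norm_image_sub_le_of_norm_hasDerivWithin_le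
    (f := Real.exp) (f' := Real.exp) (C := 1)
    (fun u _ => (Real.hasDerivAt_exp u).hasDerivWithinAt)
    (fun u hu => by
      rw [Real.norm_eq_abs, abs_of_pos (Real.exp_pos u)]
      exact Real.exp_le_one_iff.2 hu) hy hx
  simpa [Real.norm_eq_abs] using this

/-- coefficient in the phase of the time evolution -/
def Acoef (s : ℝ) : ℝ := -2 * s * (s ^ 2 - 1) / ((s ^ 2 + 1) ^ 2)

lemma Acoef_abs_le_one (s : ℝ) : |Acoef s| ≤ 1 := by
  have hden : (0:ℝ) < (s ^ 2 + 1) ^ 2 := by positivity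
  rw [Acoef, abs_div, abs_of_pos hden, div_le_one hden]
  have h1 : |(-2 : ℝ) * s * (s ^ 2 - 1)| = 2 * |s| * |s ^ 2 - 1| := by
    rw [abs_mul, abs_mul]; norm_num
  rw [h1]
  have h2 : 2 * |s| ≤ s ^ 2 + 1 := by nlinarith [sq_abs s, sq_nonneg (|s| - 1)]
  have h3 : |s ^ 2 - 1| ≤ s ^ 2 + 1 := by rw [abs_le]; constructor <;> nlinarith
  calc 2 * |s| * |s ^ 2 - 1| ≤ (s ^ 2 + 1) * (s ^ 2 + 1) :=
        mul_le_mul h2 h3 (abs_nonneg _) (by positivity)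
    _ = (s ^ 2 + 1) ^ 2 := (sq (s^2+1)).symm

lemma Acoef_continuous : Continuous Acoef := by
  apply Continuous.div (by continuity) (by continuity)
  intro s; positivity

/-- the unimodular multiplier relating the kernels at two different times -/
def mfun (τ : ℝ) (s : ℝ) : ℂ := Complex.exp (((Acoef s * τ : ℝ) : ℂ) * Complex.I)

lemma mfun_continuous (τ : ℝ) : Continuous (mfun τ) :=
  Complex.continuous_exp.comp ((Complex.continuous_ofReal.comp
    (Acoef_continuous.mul continuous_const)).mul continuous_const)

lemma mfun_norm (τ s : ℝ) : ‖mfun τ s‖ = 1 := by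
  rw [mfun, Complex.norm_exp]
  simp

lemma mfun_sub_one_le (τ s : ℝ) : ‖mfun τ s - 1‖ ≤ |τ| := by
  calc ‖mfun τ s - 1‖ ≤ |Acoef s * τ| := lip_exp_I _
    _ = |Acoef s| * |τ| := abs_mul _ _
    _ ≤ 1 * |τ| := mul_le_mul_of_nonneg_right (Acoef_abs_le_one s) (abs_nonneg _)
    _ = |τ| := one_mul _

lemma mfun_conj (τ s : ℝ) : starRingEnd ℂ (mfun τ s) = mfun (-τ) s := by
  rw [mfun, mfun, ← Complex.exp_conj]
  congr 1
  simp only [map_mul, Complex.conj_ofReal, Complex.conj_I]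
  push_cast
  ring

/-- key splitting of the time evolution of the reflection coefficient -/
lemma rEv_split (r₀ : ℝ → ℂ) (t t₀ : ℝ) (s : ℝ) :
    rEv r₀ t s = mfun (t - t₀) s * rEv r₀ t₀ s := by
  have hden : ((s:ℂ) ^ 2 + 1) ≠ 0 := by
    have h : ((s:ℂ) ^ 2 + 1) = ((s ^ 2 + 1 : ℝ) : ℂ) := by push_cast; ring
    rw [h]
    exact_mod_cast (by positivity : (s ^ 2 + 1 : ℝ) ≠ 0)
  unfold rEv mfun
  rw [← mul_assoc, ← Complex.exp_add]
  congr 2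
  rw [Acoef]
  push_cast
  field_simp
  ring

lemma resolvent_ne (w : ℂ) (hw : w.im ≠ 0) (s : ℝ) : ((s:ℂ) - w) ≠ 0 := by
  intro h; apply hw
  have h2 := congrArg Complex.im h
  simpa using h2

lemma resolvent_memℒp {w : ℂ} (hw : w.im ≠ 0) :
    MemLp (fun s : ℝ => ((s:ℂ) - w)⁻¹) 2 volume := by
  have hcont : Continuous (fun s : ℝ => ((s:ℂ) - w)⁻¹) :=
    (Complex.continuous_ofReal.sub continuous_const).inv₀ (resolvent_ne w hw)
  rw [memLp_two_iff_integrable_sq_norm hcont.aestronglyMeasurable]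
  have hbase : Integrable (fun x : ℝ => (x ^ 2 + w.im ^ 2)⁻¹) := by
    have h1 : Integrable (fun x : ℝ => (1 + (x / w.im) ^ 2)⁻¹) :=
      integrable_inv_one_add_sq.comp_div hw
    have h2 := h1.const_mul ((w.im ^ 2)⁻¹)
    apply h2.congr
    filter_upwards with x
    have : w.im ^ 2 ≠ 0 := pow_ne_zero 2 hw
    field_simp
    ring
  have hshift : Integrable (fun s : ℝ => ((s - w.re) ^ 2 + w.im ^ 2)⁻¹) := by
    have := ((measurePreserving_sub_right (volume : Measure ℝ) w.re).integrable_comp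
      hbase.aestronglyMeasurable).mpr hbase
    exact this
  apply hshift.congr
  filter_upwards with s
  have hne : ((s:ℂ) - w) ≠ 0 := resolvent_ne w hw s
  rw [norm_inv, inv_pow, Complex.sq_norm, Complex.normSq_apply]
  simp only [Complex.sub_re, Complex.sub_im, Complex.ofReal_re, Complex.ofReal_im]
  ring_nf

lemma memℒp_conj {f : ℝ → ℂ} (hf : MemLp f 2 volume) :
    MemLp (fun s => starRingEnd ℂ (f s)) 2 volume := by
  refine hf.of_le_mul (c := 1) (Complex.continuous_conj.comp_aestronglyMeasurable hf.1) ?_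
  filter_upwards with s
  simp

/-- Cauchy–Schwarz for complex L² functions on ℝ. -/
lemma int_mul_le (F G : Lp ℂ 2 (volume : Measure ℝ)) :
    ‖∫ s : ℝ, F s * G s‖ ≤ ‖F‖ * ‖G‖ := by
  set Fc : Lp ℂ 2 (volume : Measure ℝ) :=
    (memℒp_conj (Lp.memLp F)).toLp (fun s => starRingEnd ℂ (F s)) with hFc
  have hc : ⇑Fc =ᵐ[volume] fun s => starRingEnd ℂ (F s) := MemLp.coeFn_toLp _
  have h1 : ∫ s : ℝ, F s * G s = inner (𝕜 := ℂ) Fc G := by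
    rw [MeasureTheory.L2.inner_def]
    apply integral_congr_ae
    filter_upwards [hc] with s hs
    rw [RCLike.inner_apply, hs]
    simp
    ring
  rw [h1]
  refine (norm_inner_le_norm _ _).trans ?_
  have h2 : ‖Fc‖ = ‖F‖ := by
    rw [hFc, Lp.norm_toLp, Lp.norm_def]
    congr 1
    apply eLpNorm_congr_norm_ae
    filter_upwards with s
    simp
  rw [h2]

lemma integrable_mul_L2 (F G : Lp ℂ 2 (volume : Measure ℝ)) :
    Integrable (fun s : ℝ => F s * G s) volume := by
  set Fc : Lp ℂ 2 (volume : Measure ℝ) :=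
    (memℒp_conj (Lp.memLp F)).toLp (fun s => starRingEnd ℂ (F s)) with hFc
  have hc : ⇑Fc =ᵐ[volume] fun s => starRingEnd ℂ (F s) := MemLp.coeFn_toLp _
  have := MeasureTheory.L2.integrable_inner (𝕜 := ℂ) Fc G
  apply this.congr
  filter_upwards [hc] with s hs
  rw [RCLike.inner_apply, hs]
  simp
  ring

/-- The resolvent `z ↦ (z-w)⁻¹` as an element of L². -/
def resLp (w : ℂ) : Lp ℂ 2 (volume : Measure ℝ) :=
  if h : w.im = 0 then 0 else (resolvent_memℒp h).toLp _

lemma resLp_coe {w : ℂ} (hw : w.im ≠ 0) :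
    ⇑(resLp w) =ᵐ[volume] fun s : ℝ => ((s:ℂ) - w)⁻¹ := by
  rw [resLp, dif_neg hw]
  exact MemLp.coeFn_toLp _

lemma integrable_res_mul (F : Lp ℂ 2 (volume : Measure ℝ)) {w : ℂ} (hw : w.im ≠ 0) :
    Integrable (fun s : ℝ => F s / ((s:ℂ) - w)) volume := by
  have := integrable_mul_L2 F (resLp w)
  apply this.congr
  filter_upwards [resLp_coe hw] with s hs
  rw [hs, div_eq_mul_inv]

lemma norm_cauchyInt_le (F : Lp ℂ 2 (volume : Measure ℝ)) {w : ℂ} (hw : w.im ≠ 0) :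
    ‖CauchyInt (⇑F) w‖ ≤ (2 * Real.pi)⁻¹ * (‖F‖ * ‖resLp w‖) := by
  rw [CauchyInt, norm_mul]
  have h1 : ‖(1 : ℂ) / (2 * Real.pi * Complex.I)‖ = (2 * Real.pi)⁻¹ := by
    simp [norm_div, abs_of_nonneg Real.pi_pos.le, Real.pi_nonneg]
  rw [h1]
  apply mul_le_mul_of_nonneg_left _ (by positivity)
  have h2 : (∫ s : ℝ, F s / ((s:ℂ) - w)) = ∫ s : ℝ, F s * (resLp w) s := by
    apply integral_congr_ae
    filter_upwards [resLp_coe hw] with s hs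
    rw [hs, div_eq_mul_inv]
  rw [h2]
  exact int_mul_le F (resLp w)

lemma cauchyInt_sub (F G : Lp ℂ 2 (volume : Measure ℝ)) {w : ℂ} (hw : w.im ≠ 0) :
    CauchyInt (⇑F) w - CauchyInt (⇑G) w = CauchyInt (⇑(F - G)) w := by
  unfold CauchyInt
  rw [← mul_sub]
  congr 1
  rw [← integral_sub (integrable_res_mul F hw) (integrable_res_mul G hw)]
  apply integral_congr_ae
  filter_upwards [Lp.coeFn_sub F G] with s hs
  rw [hs]
  simp [sub_div]

lemma cauchyInt_congr {f g : ℝ → ℂ} (h : f =ᵐ[volume] g) (w : ℂ) :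
    CauchyInt f w = CauchyInt g w := by
  unfold CauchyInt
  congr 1
  apply integral_congr_ae
  filter_upwards [h] with s hs
  rw [hs]

lemma cplus_congr {f g : ℝ → ℂ} (h : f =ᵐ[volume] g) (z : ℝ) :
    Cplus f z = Cplus g z := by
  unfold Cplus
  have : (fun γ : ℝ => CauchyInt f ((z:ℂ) + γ * Complex.I))
      = fun γ : ℝ => CauchyInt g ((z:ℂ) + γ * Complex.I) :=
    funext fun γ => cauchyInt_congr h _
  rw [this]

lemma cminus_congr {f g : ℝ → ℂ} (h : f =ᵐ[volume] g) (z : ℝ) :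
    Cminus f z = Cminus g z := by
  unfold Cminus
  have : (fun γ : ℝ => CauchyInt f ((z:ℂ) - γ * Complex.I))
      = fun γ : ℝ => CauchyInt g ((z:ℂ) - γ * Complex.I) :=
    funext fun γ => cauchyInt_congr h _
  rw [this]

lemma memℒp_mul_mfun (τ : ℝ) (F : Lp ℂ 2 (volume : Measure ℝ)) :
    MemLp (fun s => mfun τ s * F s) 2 volume := by
  refine (Lp.memLp F).of_le_mul (c := 1)
    (((mfun_continuous τ).aestronglyMeasurable).mul (Lp.aestronglyMeasurable F)) ?_
  filter_upwards with s
  calc ‖mfun τ s * F s‖ = ‖mfun τ s‖ * ‖F s‖ := norm_mul _ _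
    _ = 1 * ‖F s‖ := by rw [mfun_norm]
    _ ≤ 1 * ‖F s‖ := le_rfl

/-- multiplication by the unimodular multiplier, as a map on L². -/
def mulLp (τ : ℝ) (F : Lp ℂ 2 (volume : Measure ℝ)) : Lp ℂ 2 (volume : Measure ℝ) :=
  (memℒp_mul_mfun τ F).toLp _

lemma mulLp_coe (τ : ℝ) (F : Lp ℂ 2 (volume : Measure ℝ)) :
    ⇑(mulLp τ F) =ᵐ[volume] fun s => mfun τ s * F s :=
  MemLp.coeFn_toLp _

lemma norm_mulLp_sub (τ : ℝ) (F : Lp ℂ 2 (volume : Measure ℝ)) :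
    ‖mulLp τ F - F‖ ≤ |τ| * ‖F‖ := by
  have hco : ⇑(mulLp τ F - F) =ᵐ[volume] fun s => (mfun τ s - 1) * F s := by
    filter_upwards [Lp.coeFn_sub (mulLp τ F) F, mulLp_coe τ F] with s h1 h2
    rw [h1]
    simp only [Pi.sub_apply]
    rw [h2]
    ring
  rw [Lp.norm_def, eLpNorm_congr_ae hco]
  have hb : ∀ᵐ s ∂(volume : Measure ℝ), ‖(mfun τ s - 1) * F s‖ ≤ |τ| * ‖F s‖ := by
    filter_upwards with s
    rw [norm_mul]
    exact mul_le_mul_of_nonneg_right (mfun_sub_one_le τ s) (norm_nonneg _)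
  have h2 := eLpNorm_le_mul_eLpNorm_of_ae_le_mul hb 2
  calc (eLpNorm (fun s => (mfun τ s - 1) * F s) 2 volume).toReal
      ≤ (ENNReal.ofReal |τ| * eLpNorm (⇑F) 2 volume).toReal := by
        apply ENNReal.toReal_mono _ h2
        exact ENNReal.mul_ne_top ENNReal.ofReal_ne_top (Lp.eLpNorm_ne_top F)
    _ = |τ| * ‖F‖ := by
        rw [ENNReal.toReal_mul, ENNReal.toReal_ofReal (abs_nonneg τ), Lp.norm_def]

lemma coeFn_finset_sum {ι : Type*} (s : Finset ι) (f : ι → Lp ℂ 2 (volume : Measure ℝ)) :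
    ⇑(∑ i ∈ s, f i) =ᵐ[volume] fun x => ∑ i ∈ s, f i x := by
  classical
  induction s using Finset.induction_on with
  | empty =>
    simp only [Finset.sum_empty]
    exact Lp.coeFn_zero ℂ 2 (volume : Measure ℝ)
  | insert a s' hx ih =>
    rw [Finset.sum_insert hx]
    filter_upwards [Lp.coeFn_add (f a) (∑ i ∈ s', f i), ih] with x h1 h2
    rw [h1]
    simp only [Pi.add_apply]
    rw [h2]
    rw [Finset.sum_insert hx]

/-- splitting identity for the generic RHP-type operator -/
lemma Kop_split
    (Cpm : (ℝ → ℂ) → ℝ → ℂ)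
    (hCpm : ∀ f g : ℝ → ℂ, f =ᵐ[volume] g → ∀ z, Cpm f z = Cpm g z)
    (ρt ρ₀ mφ : ℝ → ℂ) (hρ : ∀ s, ρt s = mφ s * ρ₀ s)
    (n : ℕ) (w c c' E : ℕ → ℂ)
    (F g : ℝ → ℂ) (hg : g =ᵐ[volume] fun s => mφ s * F s) (z : ℝ) :
    (Cpm (fun s => ρt s * F s) z + ∑ j ∈ Finset.range n,
        CauchyInt F (w j) * c j * E j / ((z:ℂ) - w j))
    = (Cpm (fun s => ρ₀ s * g s) z + ∑ j ∈ Finset.range n,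
        CauchyInt g (w j) * c' j * E j / ((z:ℂ) - w j))
      + ∑ j ∈ Finset.range n,
        (CauchyInt F (w j) * c j - CauchyInt g (w j) * c' j) * E j / ((z:ℂ) - w j) := by
  have h1 : Cpm (fun s => ρt s * F s) z = Cpm (fun s => ρ₀ s * g s) z := by
    apply hCpm
    filter_upwards [hg] with s hs
    rw [hs, hρ s]
    ring
  rw [h1, add_assoc, ← Finset.sum_add_distrib]
  congr 1
  apply Finset.sum_congr rfl
  intro j _
  ring

lemma cEv_diff (zj cj : ℕ → ℂ) (j : ℕ) (him : (zj j).im < 0)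
    (t t₀ : ℝ) (ht : 0 ≤ t) (ht₀ : 0 ≤ t₀) :
    ‖cEv zj cj t j - cEv zj cj t₀ j‖
      ≤ |(zj j).im / (zj j).re ^ 2| * ‖cj j‖ * |t - t₀| := by
  set a : ℝ := (zj j).im / (zj j).re ^ 2 with ha
  have haneg : a ≤ 0 := div_nonpos_of_nonpos_of_nonneg him.le (sq_nonneg _)
  have key : cEv zj cj t j - cEv zj cj t₀ j
      = (((Real.exp (t * a) - Real.exp (t₀ * a) : ℝ)) : ℂ) * cj j := by
    have e1 : (t * (zj j).im / (zj j).re ^ 2 : ℝ) = t * a := by rw [ha]; ring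
    have e2 : (t₀ * (zj j).im / (zj j).re ^ 2 : ℝ) = t₀ * a := by rw [ha]; ring
    simp only [cEv]
    rw [e1, e2]
    push_cast [Complex.ofReal_exp]
    ring
  rw [key, norm_mul, Complex.norm_real, Real.norm_eq_abs]
  have h1 : |Real.exp (t * a) - Real.exp (t₀ * a)| ≤ |a| * |t - t₀| := by
    have := lip_exp_neg (mul_nonpos_of_nonneg_of_nonpos ht haneg)
      (mul_nonpos_of_nonneg_of_nonpos ht₀ haneg)
    calc |Real.exp (t * a) - Real.exp (t₀ * a)| ≤ |t * a - t₀ * a| := this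
      _ = |a| * |t - t₀| := by rw [← sub_mul, abs_mul, mul_comm]
  calc |Real.exp (t * a) - Real.exp (t₀ * a)| * ‖cj j‖
      ≤ (|a| * |t - t₀|) * ‖cj j‖ := mul_le_mul_of_nonneg_right h1 (norm_nonneg _)
    _ = |a| * ‖cj j‖ * |t - t₀| := by ring

lemma cEv_norm_le (zj cj : ℕ → ℂ) (j : ℕ) (him : (zj j).im < 0)
    (t : ℝ) (ht : 0 ≤ t) : ‖cEv zj cj t j‖ ≤ ‖cj j‖ := by
  rw [cEv, norm_mul]
  have : ‖Complex.exp (((t * (zj j).im / (zj j).re ^ 2 : ℝ) : ℂ))‖ ≤ 1 := by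
    rw [Complex.norm_exp]
    simp only [Complex.ofReal_re]
    rw [Real.exp_le_one_iff, mul_div_assoc]
    exact mul_nonpos_of_nonneg_of_nonpos ht
      (div_nonpos_of_nonpos_of_nonneg him.le (sq_nonneg _))
  calc ‖Complex.exp _‖ * ‖cj j‖ ≤ 1 * ‖cj j‖ :=
        mul_le_mul_of_nonneg_right this (norm_nonneg _)
    _ = ‖cj j‖ := one_mul _

lemma exp_yim_norm_le {y im : ℝ} (hy : 0 ≤ y) (him : im < 0) :
    ‖Complex.exp (((y * im : ℝ) : ℂ))‖ ≤ 1 := by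
  rw [Complex.norm_exp]
  simp only [Complex.ofReal_re]
  rw [Real.exp_le_one_iff]
  exact mul_nonpos_of_nonneg_of_nonpos hy him.le

end RHPaux

namespace RHPaux

lemma dsc_bound (τ : ℝ) (F G : Lp ℂ 2 (volume : Measure ℝ))
    (hFG : ‖F - G‖ ≤ |τ| * ‖F‖) {w : ℂ} (hw : w.im ≠ 0)
    (ca cb E : ℂ) (A B : ℝ) (hA : 0 ≤ A) (hB : 0 ≤ B)
    (hcab : ‖ca - cb‖ ≤ A * |τ|) (hcb : ‖cb‖ ≤ B) (hE : ‖E‖ ≤ 1) :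
    ‖(CauchyInt (⇑F) w * ca - CauchyInt (⇑G) w * cb) * E‖
      ≤ ((2 * Real.pi)⁻¹ * ‖resLp w‖ * (A + B)) * (|τ| * ‖F‖) := by
  have key : CauchyInt (⇑F) w * ca - CauchyInt (⇑G) w * cb
      = CauchyInt (⇑F) w * (ca - cb) + CauchyInt (⇑(F - G)) w * cb := by
    rw [← cauchyInt_sub F G hw]
    ring
  rw [norm_mul, key]
  have h1 : ‖CauchyInt (⇑F) w * (ca - cb)‖
      ≤ ((2 * Real.pi)⁻¹ * (‖F‖ * ‖resLp w‖)) * (A * |τ|) := by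
    rw [norm_mul]
    exact mul_le_mul (norm_cauchyInt_le F hw) hcab (norm_nonneg _) (by positivity)
  have h2 : ‖CauchyInt (⇑(F - G)) w * cb‖
      ≤ ((2 * Real.pi)⁻¹ * ((|τ| * ‖F‖) * ‖resLp w‖)) * B := by
    rw [norm_mul]
    refine mul_le_mul ((norm_cauchyInt_le (F - G) hw).trans ?_) hcb (norm_nonneg _)
      (by positivity)
    apply mul_le_mul_of_nonneg_left _ (by positivity)
    exact mul_le_mul_of_nonneg_right hFG (norm_nonneg _)
  calc ‖CauchyInt (⇑F) w * (ca - cb) + CauchyInt (⇑(F - G)) w * cb‖ * ‖E‖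
      ≤ ‖CauchyInt (⇑F) w * (ca - cb) + CauchyInt (⇑(F - G)) w * cb‖ * 1 :=
        mul_le_mul_of_nonneg_left hE (norm_nonneg _)
    _ = ‖CauchyInt (⇑F) w * (ca - cb) + CauchyInt (⇑(F - G)) w * cb‖ := mul_one _
    _ ≤ ((2 * Real.pi)⁻¹ * (‖F‖ * ‖resLp w‖)) * (A * |τ|)
          + ((2 * Real.pi)⁻¹ * ((|τ| * ‖F‖) * ‖resLp w‖)) * B :=
        (norm_add_le _ _).trans (add_le_add h1 h2)
    _ = ((2 * Real.pi)⁻¹ * ‖resLp w‖ * (A + B)) * (|τ| * ‖F‖) := by ring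

lemma assemble (n : ℕ) (wp : ℕ → ℂ) (dsc : ℕ → ℂ) (x u : Lp ℂ 2 (volume : Measure ℝ))
    (hx : x = u + ∑ j ∈ Finset.range n, dsc j • resLp (wp j))
    (M : ℝ) (hu : ‖u‖ ≤ M) (Bj : ℕ → ℝ) (m : ℝ) (hm : 0 ≤ m)
    (hdsc : ∀ j ∈ Finset.range n, ‖dsc j‖ ≤ Bj j * m) :
    ‖x‖ ≤ M + (∑ j ∈ Finset.range n, Bj j * ‖resLp (wp j)‖) * m := by
  rw [hx]
  refine (norm_add_le _ _).trans (add_le_add hu ?_)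
  refine (norm_sum_le _ _).trans ?_
  rw [Finset.sum_mul]
  apply Finset.sum_le_sum
  intro j hj
  rw [norm_smul]
  calc ‖dsc j‖ * ‖resLp (wp j)‖ ≤ (Bj j * m) * ‖resLp (wp j)‖ :=
        mul_le_mul_of_nonneg_right (hdsc j hj) (norm_nonneg _)
    _ = Bj j * ‖resLp (wp j)‖ * m := by ring

end RHPaux

set_option maxHeartbeats 2000000 in
open RHPaux in
/-- Lemma 4.3 (Lemma `contG`): the time-evolved Riemann–Hilbert operator
`t ↦ K(t)` is locally Lipschitz in operator norm on `[0,T)`, and consequently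
`t ↦ (I - K(t))⁻¹` is continuous in operator norm on `[0,T)`. -/
theorem RHP_operator_time_continuity
    (T : ℝ) (hT : 0 < T) (y : ℝ) (hy : 0 ≤ y)
    (r₀ : ℝ → ℂ) (hr12 : MemHks 1 2 r₀) (hr21 : MemHks 2 1 r₀)
    (hsym : ∀ z : ℝ, z ≠ 0 →
      r₀ z = starRingEnd ℂ (r₀ (1 / z)) ∧ r₀ z = -starRingEnd ℂ (r₀ (-z)))
    (hrle : ∀ z : ℝ, ‖r₀ z‖ ≤ 1)
    (hreq : ∀ z : ℝ, ‖r₀ z‖ = 1 → z = 1 ∨ z = -1)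
    (N₀ : ℕ) (zj cj : ℕ → ℂ)
    (hzj : ∀ j < 2 * N₀, ‖zj j‖ = 1 ∧ (zj j).im < 0 ∧ (zj j).re ≠ 0)
    (hzsym : ∀ j < N₀, zj (j + N₀) = -starRingEnd ℂ (zj j))
    (hcsym : ∀ j < N₀, cj (j + N₀) = cj j)
    (K : ℝ → (LpC2 × LpC2) →L[ℂ] (LpC2 × LpC2))
    (hK : ∀ t ∈ Set.Ico (0 : ℝ) T, ∀ h : LpC2 × LpC2,
      (⇑(K t h).1 =ᵐ[volume] K1op (rEv r₀ t) N₀ zj (cEv zj cj t) y ⇑h.2) ∧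
      (⇑(K t h).2 =ᵐ[volume] K2op (rEv r₀ t) N₀ zj (cEv zj cj t) y ⇑h.1))
    (hinv : ∀ t ∈ Set.Ico (0 : ℝ) T,
      IsUnit ((1 : (LpC2 × LpC2) →L[ℂ] (LpC2 × LpC2)) - K t)) :
    (∀ t₀ ∈ Set.Ico (0 : ℝ) T, ∃ C : ℝ, ∀ t ∈ Set.Ico (0 : ℝ) T,
      ‖K t - K t₀‖ ≤ C * |t - t₀|) ∧
    (∀ t₀ ∈ Set.Ico (0 : ℝ) T, ∀ ε > (0 : ℝ), ∃ δ > (0 : ℝ), ∀ t ∈ Set.Ico (0 : ℝ) T,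
      |t - t₀| < δ →
        ‖Ring.inverse ((1 : (LpC2 × LpC2) →L[ℂ] (LpC2 × LpC2)) - K t) -
          Ring.inverse ((1 : (LpC2 × LpC2) →L[ℂ] (LpC2 × LpC2)) - K t₀)‖ < ε) := by
  have part1 : ∀ t₀ ∈ Set.Ico (0 : ℝ) T, ∃ C : ℝ, 0 ≤ C ∧ ∀ t ∈ Set.Ico (0 : ℝ) T,
      ‖K t - K t₀‖ ≤ C * |t - t₀| := by
    intro t₀ ht₀
    -- the constants
    set aabs : ℕ → ℝ := fun j => |(zj j).im / (zj j).re ^ 2| with haabs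
    set Bj2 : ℕ → ℝ := fun j =>
      (2 * Real.pi)⁻¹ * ‖resLp (zj j)‖ * (aabs j * ‖cj j‖ + ‖cj j‖) with hBj2
    set Bj1 : ℕ → ℝ := fun j =>
      (2 * Real.pi)⁻¹ * ‖resLp (starRingEnd ℂ (zj j))‖ * (aabs j * ‖cj j‖ + ‖cj j‖) with hBj1
    set S1 : ℝ := ∑ j ∈ Finset.range (2 * N₀),
      Bj1 j * ‖resLp (starRingEnd ℂ (zj j))‖ with hS1
    set S2 : ℝ := ∑ j ∈ Finset.range (2 * N₀), Bj2 j * ‖resLp (zj j)‖ with hS2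
    have hBj1nn : ∀ j, 0 ≤ Bj1 j := by
      intro j; rw [hBj1]; positivity
    have hBj2nn : ∀ j, 0 ≤ Bj2 j := by
      intro j; rw [hBj2]; positivity
    have hS1nn : 0 ≤ S1 :=
      Finset.sum_nonneg fun j _ => mul_nonneg (hBj1nn j) (norm_nonneg _)
    have hS2nn : 0 ≤ S2 :=
      Finset.sum_nonneg fun j _ => mul_nonneg (hBj2nn j) (norm_nonneg _)
    refine ⟨‖K t₀‖ + S1 + S2, by positivity, ?_⟩
    intro t ht
    set τ : ℝ := t - t₀ with hτdef
    have hC0 : (0:ℝ) ≤ (‖K t₀‖ + S1 + S2) * |τ| := by positivity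
    refine ContinuousLinearMap.opNorm_le_bound _ hC0 ?_
    intro h
    have ht0 : 0 ≤ t := ht.1
    have ht₀0 : 0 ≤ t₀ := ht₀.1
    have hzim : ∀ j ∈ Finset.range (2 * N₀), (zj j).im < 0 := fun j hj =>
      (hzj j (Finset.mem_range.mp hj)).2.1
    -- ===== component 2 =====
    have comp2 : ‖(K t h).2 - (K t₀ h).2‖ ≤ (‖K t₀‖ + S2) * (|τ| * ‖h‖) := by
      set g : LpC2 := mulLp τ h.1 with hgdef
      set dsc2 : ℕ → ℂ := fun j =>
        (CauchyInt (⇑h.1) (zj j) * cEv zj cj t j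
          - CauchyInt (⇑g) (zj j) * cEv zj cj t₀ j)
          * Complex.exp (((y * (zj j).im : ℝ) : ℂ)) with hdsc2def
      have hsplit : ∀ z : ℝ, K2op (rEv r₀ t) N₀ zj (cEv zj cj t) y (⇑h.1) z
          = K2op (rEv r₀ t₀) N₀ zj (cEv zj cj t₀) y (⇑g) z
            + ∑ j ∈ Finset.range (2 * N₀),
              (CauchyInt (⇑h.1) (zj j) * cEv zj cj t j
                - CauchyInt (⇑g) (zj j) * cEv zj cj t₀ j)
                * Complex.exp (((y * (zj j).im : ℝ) : ℂ)) / ((z:ℂ) - zj j) := by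
        intro z
        have hρ : ∀ s : ℝ, rEv r₀ t s * Complex.exp (2 * theta y s)
            = mfun τ s * (rEv r₀ t₀ s * Complex.exp (2 * theta y s)) := by
          intro s
          rw [hτdef, RHPaux.rEv_split r₀ t t₀ s]
          ring
        exact RHPaux.Kop_split Cplus (fun f g hfg => cplus_congr hfg)
          (fun s => rEv r₀ t s * Complex.exp (2 * theta y s))
          (fun s => rEv r₀ t₀ s * Complex.exp (2 * theta y s))
          (mfun τ) hρ (2 * N₀) zj (cEv zj cj t) (cEv zj cj t₀)
          (fun j => Complex.exp (((y * (zj j).im : ℝ) : ℂ)))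
          (⇑h.1) (⇑g) (mulLp_coe τ h.1) z
      have hx2 : (K t h).2 - (K t₀ h).2
          = ((K t₀ (g, h.2)).2 - (K t₀ h).2)
            + ∑ j ∈ Finset.range (2 * N₀), dsc2 j • resLp (zj j) := by
        apply MeasureTheory.Lp.ext
        have hDco : ⇑(∑ j ∈ Finset.range (2 * N₀), dsc2 j • resLp (zj j))
            =ᵐ[volume] fun z : ℝ => ∑ j ∈ Finset.range (2 * N₀),
              dsc2 j * ((z:ℂ) - zj j)⁻¹ := by
          refine (coeFn_finset_sum _ _).trans ?_
          have hall : ∀ᵐ z ∂(volume : Measure ℝ), ∀ j ∈ Finset.range (2 * N₀),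
              (dsc2 j • resLp (zj j)) z = dsc2 j * ((z:ℂ) - zj j)⁻¹ := by
            rw [eventually_all_finset]
            intro j hj
            filter_upwards [Lp.coeFn_smul (dsc2 j) (resLp (zj j)),
              resLp_coe (hzim j hj).ne] with z h1 h2
            rw [h1]
            simp only [Pi.smul_apply, smul_eq_mul]
            rw [h2]
          filter_upwards [hall] with z hz
          exact Finset.sum_congr rfl hz
        have e1 := (hK t ht h).2
        have e2 := (hK t₀ ht₀ (g, h.2)).2
        have e3 := (hK t₀ ht₀ h).2
        filter_upwards [Lp.coeFn_sub (K t h).2 (K t₀ h).2, e1, e3,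
          Lp.coeFn_add ((K t₀ (g, h.2)).2 - (K t₀ h).2)
            (∑ j ∈ Finset.range (2 * N₀), dsc2 j • resLp (zj j)),
          Lp.coeFn_sub (K t₀ (g, h.2)).2 (K t₀ h).2, e2, hDco]
          with z p1 p2 p3 p4 p5 p6 p7
        rw [p1]
        simp only [Pi.sub_apply]
        rw [p4]
        simp only [Pi.add_apply]
        rw [p5]
        simp only [Pi.sub_apply]
        rw [p6, p7, p2, p3]
        have hSS : ∑ j ∈ Finset.range (2 * N₀),
            (CauchyInt (⇑h.1) (zj j) * cEv zj cj t j
              - CauchyInt (⇑g) (zj j) * cEv zj cj t₀ j)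
              * Complex.exp (((y * (zj j).im : ℝ) : ℂ)) / ((z:ℂ) - zj j)
            = ∑ j ∈ Finset.range (2 * N₀), dsc2 j * ((z:ℂ) - zj j)⁻¹ :=
          Finset.sum_congr rfl (fun j _ => by rw [hdsc2def, div_eq_mul_inv])
        rw [hsplit z, hSS]
        ring
      have hu2 : ‖(K t₀ (g, h.2)).2 - (K t₀ h).2‖ ≤ ‖K t₀‖ * (|τ| * ‖h‖) := by
        have h1 : (K t₀ (g, h.2)).2 - (K t₀ h).2 = (K t₀ ((g, h.2) - h)).2 := by
          rw [map_sub]; rfl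
        rw [h1]
        refine (norm_snd_le _).trans ?_
        refine (ContinuousLinearMap.le_opNorm _ _).trans ?_
        apply mul_le_mul_of_nonneg_left _ (norm_nonneg (K t₀))
        have h2 : (g, h.2) - h = (g - h.1, h.2 - h.2) := rfl
        rw [h2, Prod.norm_def]
        simp only [sub_self, norm_zero]
        rw [max_eq_left (norm_nonneg _)]
        calc ‖g - h.1‖ ≤ |τ| * ‖h.1‖ := norm_mulLp_sub τ h.1
          _ ≤ |τ| * ‖h‖ := mul_le_mul_of_nonneg_left (norm_fst_le h) (abs_nonneg τ)
      have hdscb : ∀ j ∈ Finset.range (2 * N₀), ‖dsc2 j‖ ≤ Bj2 j * (|τ| * ‖h‖) := by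
        intro j hj
        obtain ⟨-, him, -⟩ := hzj j (Finset.mem_range.mp hj)
        have hFG : ‖h.1 - g‖ ≤ |τ| * ‖h.1‖ := by
          rw [norm_sub_rev]; exact norm_mulLp_sub τ h.1
        have hbd := dsc_bound τ h.1 g hFG him.ne
          (cEv zj cj t j) (cEv zj cj t₀ j) (Complex.exp (((y * (zj j).im : ℝ) : ℂ)))
          (aabs j * ‖cj j‖) (‖cj j‖)
          (by positivity) (norm_nonneg _)
          (by
            have := cEv_diff zj cj j him t t₀ ht0 ht₀0
            calc ‖cEv zj cj t j - cEv zj cj t₀ j‖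
                ≤ |(zj j).im / (zj j).re ^ 2| * ‖cj j‖ * |t - t₀| := this
              _ = aabs j * ‖cj j‖ * |τ| := by rw [haabs]
          )
          (cEv_norm_le zj cj j him t₀ ht₀0)
          (exp_yim_norm_le hy him)
        calc ‖dsc2 j‖
            ≤ ((2 * Real.pi)⁻¹ * ‖resLp (zj j)‖ * (aabs j * ‖cj j‖ + ‖cj j‖))
              * (|τ| * ‖h.1‖) := hbd
          _ ≤ ((2 * Real.pi)⁻¹ * ‖resLp (zj j)‖ * (aabs j * ‖cj j‖ + ‖cj j‖))
              * (|τ| * ‖h‖) := by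
              apply mul_le_mul_of_nonneg_left _ (by positivity)
              exact mul_le_mul_of_nonneg_left (norm_fst_le h) (abs_nonneg τ)
          _ = Bj2 j * (|τ| * ‖h‖) := by rw [hBj2]
      have := assemble (2 * N₀) zj dsc2
        ((K t h).2 - (K t₀ h).2) ((K t₀ (g, h.2)).2 - (K t₀ h).2) hx2
        (‖K t₀‖ * (|τ| * ‖h‖)) hu2 Bj2 (|τ| * ‖h‖) (by positivity) hdscb
      calc ‖(K t h).2 - (K t₀ h).2‖
          ≤ ‖K t₀‖ * (|τ| * ‖h‖) + S2 * (|τ| * ‖h‖) := by rw [hS2]; exact this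
        _ = (‖K t₀‖ + S2) * (|τ| * ‖h‖) := by ring
    -- ===== component 1 =====
    have comp1 : ‖(K t h).1 - (K t₀ h).1‖ ≤ (‖K t₀‖ + S1) * (|τ| * ‖h‖) := by
      set g : LpC2 := mulLp (-τ) h.2 with hgdef
      set dsc1 : ℕ → ℂ := fun j =>
        (CauchyInt (⇑h.2) (starRingEnd ℂ (zj j)) * starRingEnd ℂ (cEv zj cj t j)
          - CauchyInt (⇑g) (starRingEnd ℂ (zj j)) * starRingEnd ℂ (cEv zj cj t₀ j))
          * Complex.exp (((y * (zj j).im : ℝ) : ℂ)) with hdsc1def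
      have hsplit : ∀ z : ℝ, K1op (rEv r₀ t) N₀ zj (cEv zj cj t) y (⇑h.2) z
          = K1op (rEv r₀ t₀) N₀ zj (cEv zj cj t₀) y (⇑g) z
            + ∑ j ∈ Finset.range (2 * N₀),
              (CauchyInt (⇑h.2) (starRingEnd ℂ (zj j)) * starRingEnd ℂ (cEv zj cj t j)
                - CauchyInt (⇑g) (starRingEnd ℂ (zj j)) * starRingEnd ℂ (cEv zj cj t₀ j))
                * Complex.exp (((y * (zj j).im : ℝ) : ℂ))
                / ((z:ℂ) - starRingEnd ℂ (zj j)) := by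
        intro z
        have hρ : ∀ s : ℝ, -(starRingEnd ℂ (rEv r₀ t s)) * Complex.exp (-2 * theta y s)
            = mfun (-τ) s
              * (-(starRingEnd ℂ (rEv r₀ t₀ s)) * Complex.exp (-2 * theta y s)) := by
          intro s
          rw [hτdef, RHPaux.rEv_split r₀ t t₀ s, map_mul, RHPaux.mfun_conj]
          ring
        exact RHPaux.Kop_split Cminus (fun f g hfg => cminus_congr hfg)
          (fun s => -(starRingEnd ℂ (rEv r₀ t s)) * Complex.exp (-2 * theta y s))
          (fun s => -(starRingEnd ℂ (rEv r₀ t₀ s)) * Complex.exp (-2 * theta y s))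
          (mfun (-τ)) hρ (2 * N₀) (fun j => starRingEnd ℂ (zj j))
          (fun j => starRingEnd ℂ (cEv zj cj t j))
          (fun j => starRingEnd ℂ (cEv zj cj t₀ j))
          (fun j => Complex.exp (((y * (zj j).im : ℝ) : ℂ)))
          (⇑h.2) (⇑g) (mulLp_coe (-τ) h.2) z
      have hzcim : ∀ j ∈ Finset.range (2 * N₀), (starRingEnd ℂ (zj j)).im ≠ 0 := by
        intro j hj
        rw [Complex.conj_im]
        exact neg_ne_zero.mpr (hzim j hj).ne
      have hx1 : (K t h).1 - (K t₀ h).1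
          = ((K t₀ (h.1, g)).1 - (K t₀ h).1)
            + ∑ j ∈ Finset.range (2 * N₀), dsc1 j • resLp (starRingEnd ℂ (zj j)) := by
        apply MeasureTheory.Lp.ext
        have hDco : ⇑(∑ j ∈ Finset.range (2 * N₀), dsc1 j • resLp (starRingEnd ℂ (zj j)))
            =ᵐ[volume] fun z : ℝ => ∑ j ∈ Finset.range (2 * N₀),
              dsc1 j * ((z:ℂ) - starRingEnd ℂ (zj j))⁻¹ := by
          refine (coeFn_finset_sum _ _).trans ?_
          have hall : ∀ᵐ z ∂(volume : Measure ℝ), ∀ j ∈ Finset.range (2 * N₀),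
              (dsc1 j • resLp (starRingEnd ℂ (zj j))) z
                = dsc1 j * ((z:ℂ) - starRingEnd ℂ (zj j))⁻¹ := by
            rw [eventually_all_finset]
            intro j hj
            filter_upwards [Lp.coeFn_smul (dsc1 j) (resLp (starRingEnd ℂ (zj j))),
              resLp_coe (hzcim j hj)] with z h1 h2
            rw [h1]
            simp only [Pi.smul_apply, smul_eq_mul]
            rw [h2]
          filter_upwards [hall] with z hz
          exact Finset.sum_congr rfl hz
        have e1 := (hK t ht h).1
        have e2 := (hK t₀ ht₀ (h.1, g)).1
        have e3 := (hK t₀ ht₀ h).1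
        filter_upwards [Lp.coeFn_sub (K t h).1 (K t₀ h).1, e1, e3,
          Lp.coeFn_add ((K t₀ (h.1, g)).1 - (K t₀ h).1)
            (∑ j ∈ Finset.range (2 * N₀), dsc1 j • resLp (starRingEnd ℂ (zj j))),
          Lp.coeFn_sub (K t₀ (h.1, g)).1 (K t₀ h).1, e2, hDco]
          with z p1 p2 p3 p4 p5 p6 p7
        rw [p1]
        simp only [Pi.sub_apply]
        rw [p4]
        simp only [Pi.add_apply]
        rw [p5]
        simp only [Pi.sub_apply]
        rw [p6, p7, p2, p3]
        have hSS : ∑ j ∈ Finset.range (2 * N₀),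
            (CauchyInt (⇑h.2) (starRingEnd ℂ (zj j)) * starRingEnd ℂ (cEv zj cj t j)
              - CauchyInt (⇑g) (starRingEnd ℂ (zj j)) * starRingEnd ℂ (cEv zj cj t₀ j))
              * Complex.exp (((y * (zj j).im : ℝ) : ℂ))
              / ((z:ℂ) - starRingEnd ℂ (zj j))
            = ∑ j ∈ Finset.range (2 * N₀), dsc1 j * ((z:ℂ) - starRingEnd ℂ (zj j))⁻¹ :=
          Finset.sum_congr rfl (fun j _ => by rw [hdsc1def, div_eq_mul_inv])
        rw [hsplit z, hSS]
        ring
      have hu1 : ‖(K t₀ (h.1, g)).1 - (K t₀ h).1‖ ≤ ‖K t₀‖ * (|τ| * ‖h‖) := by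
        have h1 : (K t₀ (h.1, g)).1 - (K t₀ h).1 = (K t₀ ((h.1, g) - h)).1 := by
          rw [map_sub]; rfl
        rw [h1]
        refine (norm_fst_le _).trans ?_
        refine (ContinuousLinearMap.le_opNorm _ _).trans ?_
        apply mul_le_mul_of_nonneg_left _ (norm_nonneg (K t₀))
        have h2 : (h.1, g) - h = (h.1 - h.1, g - h.2) := rfl
        rw [h2, Prod.norm_def]
        simp only [sub_self, norm_zero]
        rw [max_eq_right (norm_nonneg _)]
        calc ‖g - h.2‖ ≤ |(-τ)| * ‖h.2‖ := norm_mulLp_sub (-τ) h.2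
          _ = |τ| * ‖h.2‖ := by rw [abs_neg]
          _ ≤ |τ| * ‖h‖ := mul_le_mul_of_nonneg_left (norm_snd_le h) (abs_nonneg τ)
      have hdscb : ∀ j ∈ Finset.range (2 * N₀), ‖dsc1 j‖ ≤ Bj1 j * (|τ| * ‖h‖) := by
        intro j hj
        obtain ⟨-, him, -⟩ := hzj j (Finset.mem_range.mp hj)
        have hFG : ‖h.2 - g‖ ≤ |τ| * ‖h.2‖ := by
          rw [norm_sub_rev]
          calc ‖g - h.2‖ ≤ |(-τ)| * ‖h.2‖ := norm_mulLp_sub (-τ) h.2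
            _ = |τ| * ‖h.2‖ := by rw [abs_neg]
        have hbd := dsc_bound τ h.2 g hFG (hzcim j hj)
          (starRingEnd ℂ (cEv zj cj t j)) (starRingEnd ℂ (cEv zj cj t₀ j))
          (Complex.exp (((y * (zj j).im : ℝ) : ℂ)))
          (aabs j * ‖cj j‖) (‖cj j‖)
          (by positivity) (norm_nonneg _)
          (by
            rw [← map_sub, RCLike.norm_conj]
            have := cEv_diff zj cj j him t t₀ ht0 ht₀0
            calc ‖cEv zj cj t j - cEv zj cj t₀ j‖
                ≤ |(zj j).im / (zj j).re ^ 2| * ‖cj j‖ * |t - t₀| := this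
              _ = aabs j * ‖cj j‖ * |τ| := by rw [haabs]
          )
          (by rw [RCLike.norm_conj]; exact cEv_norm_le zj cj j him t₀ ht₀0)
          (exp_yim_norm_le hy him)
        calc ‖dsc1 j‖
            ≤ ((2 * Real.pi)⁻¹ * ‖resLp (starRingEnd ℂ (zj j))‖
                * (aabs j * ‖cj j‖ + ‖cj j‖)) * (|τ| * ‖h.2‖) := hbd
          _ ≤ ((2 * Real.pi)⁻¹ * ‖resLp (starRingEnd ℂ (zj j))‖
                * (aabs j * ‖cj j‖ + ‖cj j‖)) * (|τ| * ‖h‖) := by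
              apply mul_le_mul_of_nonneg_left _ (by positivity)
              exact mul_le_mul_of_nonneg_left (norm_snd_le h) (abs_nonneg τ)
          _ = Bj1 j * (|τ| * ‖h‖) := by rw [hBj1]
      have := assemble (2 * N₀) (fun j => starRingEnd ℂ (zj j)) dsc1
        ((K t h).1 - (K t₀ h).1) ((K t₀ (h.1, g)).1 - (K t₀ h).1) hx1
        (‖K t₀‖ * (|τ| * ‖h‖)) hu1 Bj1 (|τ| * ‖h‖) (by positivity) hdscb
      calc ‖(K t h).1 - (K t₀ h).1‖
          ≤ ‖K t₀‖ * (|τ| * ‖h‖) + S1 * (|τ| * ‖h‖) := by rw [hS1]; exact this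
        _ = (‖K t₀‖ + S1) * (|τ| * ‖h‖) := by ring
    -- combine the two components
    have hsub1 : ((K t - K t₀) h).1 = (K t h).1 - (K t₀ h).1 := rfl
    have hsub2 : ((K t - K t₀) h).2 = (K t h).2 - (K t₀ h).2 := rfl
    rw [Prod.norm_def, hsub1, hsub2]
    apply max_le
    · calc ‖(K t h).1 - (K t₀ h).1‖ ≤ (‖K t₀‖ + S1) * (|τ| * ‖h‖) := comp1
        _ ≤ (‖K t₀‖ + S1 + S2) * (|τ| * ‖h‖) := by
            apply mul_le_mul_of_nonneg_right _ (by positivity)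
            linarith
        _ = (‖K t₀‖ + S1 + S2) * |τ| * ‖h‖ := by ring
    · calc ‖(K t h).2 - (K t₀ h).2‖ ≤ (‖K t₀‖ + S2) * (|τ| * ‖h‖) := comp2
        _ ≤ (‖K t₀‖ + S1 + S2) * (|τ| * ‖h‖) := by
            apply mul_le_mul_of_nonneg_right _ (by positivity)
            linarith
        _ = (‖K t₀‖ + S1 + S2) * |τ| * ‖h‖ := by ring
  constructor
  · intro t₀ ht₀
    obtain ⟨C, _, hC⟩ := part1 t₀ ht₀
    exact ⟨C, hC⟩
  · intro t₀ ht₀ ε hε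
    obtain ⟨C, hC0, hC⟩ := part1 t₀ ht₀
    obtain ⟨u, hu⟩ := hinv t₀ ht₀
    have hcont : ContinuousAt Ring.inverse
        ((1 : (LpC2 × LpC2) →L[ℂ] (LpC2 × LpC2)) - K t₀) := by
      rw [← hu]
      exact NormedRing.inverse_continuousAt u
    rw [Metric.continuousAt_iff] at hcont
    obtain ⟨δ', hδ'0, hδ'⟩ := hcont ε hε
    refine ⟨δ' / (C + 1), by positivity, ?_⟩
    intro t ht htt
    have hd : dist ((1 : (LpC2 × LpC2) →L[ℂ] (LpC2 × LpC2)) - K t)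
        ((1 : (LpC2 × LpC2) →L[ℂ] (LpC2 × LpC2)) - K t₀) < δ' := by
      rw [dist_eq_norm]
      have h1 : (1 : (LpC2 × LpC2) →L[ℂ] (LpC2 × LpC2)) - K t
          - ((1 : (LpC2 × LpC2) →L[ℂ] (LpC2 × LpC2)) - K t₀) = -(K t - K t₀) := by
        abel
      rw [h1, norm_neg]
      calc ‖K t - K t₀‖ ≤ C * |t - t₀| := hC t ht
        _ ≤ C * (δ' / (C + 1)) := mul_le_mul_of_nonneg_left htt.le hC0
        _ = C / (C + 1) * δ' := by ring
        _ < 1 * δ' := by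
            apply mul_lt_mul_of_pos_right _ hδ'0
            rw [div_lt_one (by positivity)]
            linarith
        _ = δ' := one_mul _
    have h2 := hδ' hd
    rw [dist_eq_norm] at h2
    exact h2
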